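/- arXiv:1003.5944 — 8 statements merged into one kernel-verified Lean document; each statement's English description precedes it below -/
import Mathlib

section
/- For every n ≥ 3 there exists an n-skeletal simplicial set that is not (2n−2)-coskeletal; that is, an n-skeletal simplicial set containing a (2n−1)-sphere that has no filler. -/
open CategoryTheory Simplicial

namespace AufhebungSSet

/-- An `n`-simplex `x` of a simplicial set `X` is degenerate if it is the image of a
simplex of strictly smaller dimension under the action of an epimorphism of `Δ`. -/
def IsDegen (X : SSet) {n : ℕ} (x : X _⦋n⦌) : Prop :=
  ∃ m : ℕ, m < n ∧ ∃ ε : (⦋n⦌ : SimplexCategory) ⟶ ⦋m⦌,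
    Function.Surjective ε.toOrderHom ∧ ∃ y : X _⦋m⦌, x = X.map ε.op y

/-- The degeneracy `dgn x = n - k`, where `k` is the least dimension from which `x`
is the image of a simplex under the action of an epimorphism; by the Eilenberg–Zilber
lemma this is the dimension of the nondegenerate simplex of which `x` is a degeneracy. -/
noncomputable def dgn (X : SSet) {n : ℕ} (x : X _⦋n⦌) : ℕ :=
  n - sInf (setOf fun k : ℕ => ∃ ε : (⦋n⦌ : SimplexCategory) ⟶ ⦋k⦌,
    Function.Surjective ε.toOrderHom ∧ ∃ y : X _⦋k⦌, x = X.map ε.op y)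

/-- `i` reduces `x` when `dgn (x δᵢ) = dgn x - 1`. -/
def Reduces (X : SSet) {n : ℕ} (i : Fin (n + 2)) (x : X _⦋n + 1⦌) : Prop :=
  dgn X (X.map (SimplexCategory.δ i).op x) + 1 = dgn X x

/-- `i` properly reduces `x` when `x = x δᵢ σᵢ`. -/
def ProperlyReduces (X : SSet) {n : ℕ} (i : Fin (n + 1)) (x : X _⦋n + 1⦌) : Prop :=
  x = X.map (SimplexCategory.σ i).op (X.map (SimplexCategory.δ i.castSucc).op x)

/-- A `(K+2)`-sphere: a family `c₀, …, c_{K+2}` of `(K+1)`-simplices satisfying the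
cycle equations `cⱼ δᵢ = cᵢ δ_{j-1}` for `i < j` (here reindexed: `c_{j+1} δᵢ = cᵢ δⱼ`
for `i ≤ j`). -/
def IsSphere (X : SSet) {K : ℕ} (c : Fin (K + 3) → X _⦋K + 1⦌) : Prop :=
  ∀ i j : Fin (K + 2), i ≤ j →
    X.map (SimplexCategory.δ i).op (c j.succ) = X.map (SimplexCategory.δ j).op (c i.castSucc)

/-- `y` fills the sphere `c` when `y δᵢ = cᵢ` for all `i`. -/
def IsFiller (X : SSet) {K : ℕ} (y : X _⦋K + 2⦌) (c : Fin (K + 3) → X _⦋K + 1⦌) : Prop :=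
  ∀ i : Fin (K + 3), X.map (SimplexCategory.δ i).op y = c i

/-!
The example is `Δ[n]/∂Δ[n]`, whose only nondegenerate simplices are the base point and the
`n`-simplex. With `K + 2 = 2n - 1`, let `a, b : [K+1] → [n]` be the surjections `k ↦ k - (n - 2)`
and `k ↦ min k n`, which collapse the first, resp. the last, `n - 1` vertices. The faces
`a, …, a, b, …, b` (`n` copies of `a`) form a sphere: deleting a vertex inside the collapsed block
of `a` or `b` gives the same map, and deleting any other vertex gives a non-surjection, hence the
base point. A filler would be a surjection `y : [K+2] → [n]` with `y δ₀ = a` and `y δ_{K+2} = b`;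
evaluating both at vertex `n + 1` of `[K+2]` gives `2 = n`.
-/

universe u

open SimplexCategory

open Classical in
/-- `Δ[n]/∂Δ[n]`. Its `k`-simplices are the surjections `[k] → [n]` and the base point `none`;
a simplex whose composite with `τ` is no longer surjective is sent to the base point by `τ`. -/
noncomputable def simplexModBoundary (n : ℕ) : SSet.{u} where
  obj k := Option (ULift.{u} {f : k.unop ⟶ ⦋n⦌ // Epi f})
  map τ := TypeCat.ofHom fun x => x.bind fun f =>
    if h : Epi (τ.unop ≫ f.down.1) then some ⟨⟨_, h⟩⟩ else none
  map_id k := by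
    refine ConcreteCategory.hom_ext _ _ fun x => ?_
    rcases x with _ | ⟨f, hf⟩
    · rfl
    · simp [TypeCat.ofHom, hf]
  map_comp τ σ := by
    refine ConcreteCategory.hom_ext _ _ fun x => ?_
    rcases x with _ | ⟨f, hf⟩
    · rfl
    · by_cases h : Epi (τ.unop ≫ f)
      · simp [TypeCat.ofHom, h]
      · have : ¬ Epi (σ.unop ≫ τ.unop ≫ f) := fun h' => h (epi_of_epi σ.unop _)
        simp [TypeCat.ofHom, h, this]

namespace simplexModBoundary

variable {n : ℕ} {k l : SimplexCategory}

lemma map_none (τ : k ⟶ l) : (simplexModBoundary.{u} n).map τ.op none = none := rfl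

lemma map_some_of_epi (τ : k ⟶ l) (f : l ⟶ ⦋n⦌) [Epi f] [Epi (τ ≫ f)] :
    (simplexModBoundary.{u} n).map τ.op (some ⟨f, ‹_›⟩) = some ⟨τ ≫ f, ‹_›⟩ :=
  dif_pos _

lemma map_some_of_not_epi (τ : k ⟶ l) (f : l ⟶ ⦋n⦌) [Epi f] (h : ¬ Epi (τ ≫ f)) :
    (simplexModBoundary.{u} n).map τ.op (some ⟨f, ‹_›⟩) = none :=
  dif_neg h

lemma map_some_eq_of_comp_eq (τ τ' : k ⟶ l) (f f' : l ⟶ ⦋n⦌) [Epi f] [Epi f']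
    (h : τ ≫ f = τ' ≫ f') :
    (simplexModBoundary.{u} n).map τ.op (some ⟨f, ‹_›⟩) =
      (simplexModBoundary.{u} n).map τ'.op (some ⟨f', ‹_›⟩) := by
  by_cases hτ : Epi (τ ≫ f)
  · have : Epi (τ' ≫ f') := h ▸ hτ
    rw [map_some_of_epi, map_some_of_epi]
    exact congrArg (some ∘ ULift.up) (Subtype.ext h)
  · rw [map_some_of_not_epi _ _ hτ, map_some_of_not_epi _ _ (h ▸ hτ)]

lemma comp_eq_of_map_eq_some {τ : k ⟶ l} {f : l ⟶ ⦋n⦌} {g : k ⟶ ⦋n⦌} [Epi f] [Epi g]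
    (h : (simplexModBoundary.{u} n).map τ.op (some ⟨f, ‹_›⟩) = some ⟨g, ‹_›⟩) : τ ≫ f = g := by
  by_cases hτ : Epi (τ ≫ f)
  · rw [map_some_of_epi] at h
    exact congrArg (fun x => x.down.1) (Option.some_injective _ h)
  · rw [map_some_of_not_epi _ _ hτ] at h
    cases h

lemma isDegen {m : ℕ} (hm : n < m) (x : (simplexModBoundary.{u} n) _⦋m⦌) :
    IsDegen (simplexModBoundary.{u} n) x := by
  rcases x with _ | ⟨f, hf⟩
  · refine ⟨0, by omega, SimplexCategory.const _ _ 0,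
      fun _ => ⟨0, Subsingleton.elim (α := Fin 1) _ _⟩, none, rfl⟩
  · refine ⟨n, hm, f, SimplexCategory.epi_iff_surjective.mp hf, some ⟨𝟙 _, inferInstance⟩, ?_⟩
    rw [map_some_of_epi]
    exact congrArg (some ∘ ULift.up) (Subtype.ext (Category.comp_id f).symm)

end simplexModBoundary

lemma val_succAbove {N : ℕ} (t : Fin (N + 2)) (k : Fin (N + 1)) :
    (t.succAbove k : ℕ) = if (k : ℕ) < t then (k : ℕ) else k + 1 := by
  rcases lt_or_ge (k : ℕ) t with h | h
  · rw [Fin.succAbove_of_castSucc_lt _ _ h, if_pos h, Fin.val_castSucc]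
  · rw [Fin.succAbove_of_le_castSucc _ _ h, if_neg (not_lt.2 h), Fin.val_succ]

lemma δ_comp_toOrderHom_apply {m p : ℕ} (t : Fin (m + 2)) (g : ⦋m + 1⦌ ⟶ ⦋p⦌) (k : Fin (m + 1)) :
    (δ t ≫ g).toOrderHom k = g.toOrderHom (t.succAbove k) := rfl

section CollapseMaps

variable {n K : ℕ} (hK : K + 3 = 2 * n)

def collapseBottom : ⦋K + 1⦌ ⟶ ⦋n⦌ :=
  mkHom ⟨fun k => ⟨k - (n - 2), by omega⟩,
    fun _ _ h => Fin.mk_le_mk.2 (Nat.sub_le_sub_right h _)⟩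

def collapseTop : ⦋K + 1⦌ ⟶ ⦋n⦌ :=
  mkHom ⟨fun k => ⟨min k n, by omega⟩, fun _ _ h => Fin.mk_le_mk.2 (min_le_min_right n h)⟩

@[simp]
lemma val_collapseBottom_apply (k : Fin (K + 2)) :
    ((collapseBottom hK).toOrderHom k : ℕ) = k - (n - 2) := rfl

@[simp]
lemma val_collapseTop_apply (k : Fin (K + 2)) :
    ((collapseTop : ⦋K + 1⦌ ⟶ ⦋n⦌).toOrderHom k : ℕ) = min (k : ℕ) n := rfl

lemma epi_collapseBottom : Epi (collapseBottom hK) := by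
  rw [SimplexCategory.epi_iff_surjective]
  intro v
  exact ⟨⟨v + (n - 2), by simp; omega⟩, Fin.ext (by simp)⟩

lemma epi_collapseTop (h : n ≤ K + 1) : Epi (collapseTop : ⦋K + 1⦌ ⟶ ⦋n⦌) := by
  rw [SimplexCategory.epi_iff_surjective]
  intro v
  exact ⟨⟨v, by simp; omega⟩, Fin.ext (by simp; omega)⟩

lemma δ_comp_collapseBottom_eq {s t : Fin (K + 2)} (hs : (s : ℕ) < n - 1)
    (ht : (t : ℕ) < n - 1) :
    δ s ≫ collapseBottom hK = δ t ≫ collapseBottom hK := by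
  ext k : 4
  simp only [δ_comp_toOrderHom_apply, val_collapseBottom_apply, val_succAbove]
  split_ifs <;> omega

lemma δ_comp_collapseTop_eq {s t : Fin (K + 2)} (hs : n ≤ (s : ℕ)) (ht : n ≤ (t : ℕ)) :
    δ s ≫ (collapseTop : ⦋K + 1⦌ ⟶ ⦋n⦌) = δ t ≫ collapseTop := by
  ext k : 4
  simp only [δ_comp_toOrderHom_apply, val_collapseTop_apply, val_succAbove]
  split_ifs <;> omega

lemma not_epi_δ_comp_collapseBottom {t : Fin (K + 2)} (ht : n - 1 ≤ (t : ℕ)) :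
    ¬ Epi (δ t ≫ collapseBottom hK) := by
  rw [SimplexCategory.epi_iff_surjective]
  intro h
  obtain ⟨k, hk⟩ := h ⟨t - (n - 2), by simp; omega⟩
  have hk := congrArg Fin.val hk
  simp only [δ_comp_toOrderHom_apply, val_collapseBottom_apply, val_succAbove] at hk
  split_ifs at hk <;> omega

lemma not_epi_δ_comp_collapseTop {t : Fin (K + 2)} (ht : (t : ℕ) < n) :
    ¬ Epi (δ t ≫ (collapseTop : ⦋K + 1⦌ ⟶ ⦋n⦌)) := by
  rw [SimplexCategory.epi_iff_surjective]
  intro h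
  obtain ⟨k, hk⟩ := h ⟨t, by simp; omega⟩
  have hk := congrArg Fin.val hk
  simp only [δ_comp_toOrderHom_apply, val_collapseTop_apply, val_succAbove] at hk
  split_ifs at hk <;> omega

end CollapseMaps

namespace simplexModBoundary

variable {n K : ℕ} (hK : K + 3 = 2 * n)

noncomputable def sphere (i : Fin (K + 3)) : (simplexModBoundary.{u} n) _⦋K + 1⦌ :=
  if (i : ℕ) < n then some ⟨collapseBottom hK, epi_collapseBottom hK⟩
  else some ⟨collapseTop, epi_collapseTop (by omega)⟩

lemma sphere_of_lt {i : Fin (K + 3)} (hi : (i : ℕ) < n) :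
    sphere.{u} hK i = some ⟨collapseBottom hK, epi_collapseBottom hK⟩ := if_pos hi

lemma sphere_of_le {i : Fin (K + 3)} (hi : n ≤ (i : ℕ)) :
    sphere.{u} hK i = some ⟨collapseTop, epi_collapseTop (by omega)⟩ := if_neg (not_lt.2 hi)

theorem isSphere_sphere : IsSphere (simplexModBoundary.{u} n) (sphere hK) := by
  intro i j hij
  have hij : (i : ℕ) ≤ j := hij
  have := epi_collapseBottom hK
  have := epi_collapseTop (K := K) (n := n) (by omega)
  by_cases hj : (j : ℕ) + 1 < n
  · rw [sphere_of_lt hK (by simpa using hj), sphere_of_lt hK (by simp; omega)]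
    exact map_some_eq_of_comp_eq _ _ _ _ (δ_comp_collapseBottom_eq hK (by omega) (by omega))
  by_cases hi : n ≤ (i : ℕ)
  · rw [sphere_of_le hK (by simp; omega), sphere_of_le hK (by simpa using hi)]
    exact map_some_eq_of_comp_eq _ _ _ _ (δ_comp_collapseTop_eq (by omega) (by omega))
  · rw [sphere_of_le hK (by simp; omega), sphere_of_lt hK (by simp; omega),
      map_some_of_not_epi _ _ (not_epi_δ_comp_collapseTop (by omega)),
      map_some_of_not_epi _ _ (not_epi_δ_comp_collapseBottom hK (by omega))]

theorem not_isFiller_sphere (hn : 3 ≤ n) (y : (simplexModBoundary.{u} n) _⦋K + 2⦌) :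
    ¬ IsFiller (simplexModBoundary.{u} n) y (sphere hK) := by
  intro hy
  have h0 := hy 0
  have hlast := hy (Fin.last _)
  rw [sphere_of_lt hK (by simp; omega)] at h0
  rw [sphere_of_le hK (by simp; omega)] at hlast
  rcases y with _ | ⟨g, hg⟩
  · cases h0
  have := epi_collapseBottom hK
  have := epi_collapseTop (K := K) (n := n) (by omega)
  have e0 : (g.toOrderHom ⟨n + 1, by simp; omega⟩ : ℕ) = n - (n - 2) :=
    congrArg (fun f => (f.toOrderHom ⟨n, by simp; omega⟩ : ℕ)) (comp_eq_of_map_eq_some h0)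
  have e1 : (g.toOrderHom ⟨n + 1, by simp; omega⟩ : ℕ) = min (n + 1) n := by
    have := congrArg (fun f => (f.toOrderHom ⟨n + 1, by simp; omega⟩ : ℕ))
      (comp_eq_of_map_eq_some hlast)
    rw [δ_comp_toOrderHom_apply, Fin.succAbove_last] at this
    exact this
  omega

end simplexModBoundary

/-- For every `n ≥ 3` there is an `n`-skeletal simplicial set containing a
`(2n-1)`-sphere with no filler, so it is not `(2n-2)`-coskeletal. -/
theorem exists_skeletal_not_coskeletal (n : ℕ) (hn : 3 ≤ n) :
    ∃ X : SSet, (∀ k : ℕ, n < k → ∀ x : X _⦋k⦌, IsDegen X x) ∧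
      ∃ (K : ℕ) (_ : K + 2 = 2 * n - 1) (c : Fin (K + 3) → X _⦋K + 1⦌),
        IsSphere X c ∧ ∀ y : X _⦋K + 2⦌, ¬ IsFiller X y c := by
  have hK : 2 * n - 3 + 3 = 2 * n := by omega
  exact ⟨simplexModBoundary n, fun _ hk => simplexModBoundary.isDegen hk, 2 * n - 3, by omega,
    simplexModBoundary.sphere hK, simplexModBoundary.isSphere_sphere hK,
    simplexModBoundary.not_isFiller_sphere hK hn⟩

end AufhebungSSet
end

section
/- (Eilenberg–Zilber lemma) Let X be a simplicial set. For each x ∈ X_n there exist a natural number k ≤ n, a nondegenerate k-simplex y ∈ X_k, and an epimorphism ε : [n] → [k] of Δ such that x = yε; moreover y and ε are unique with these properties. -/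
open CategoryTheory Simplicial

namespace AufhebungSSet

/- Mathlib's `SSet.degenerate` allows any map `[n] ⟶ [m]` with `m < n`; it agrees with
`IsDegen` because such a map factors through its image as an epimorphism onto `[m']`, `m' ≤ m`. -/
lemma isDegen_iff_mem_degenerate (X : SSet) {n : ℕ} (x : X _⦋n⦌) :
    IsDegen X x ↔ x ∈ X.degenerate n := by
  simp only [IsDegen, SSet.mem_degenerate_iff, ← SimplexCategory.epi_iff_surjective,
    Set.mem_range, exists_prop, eq_comm (a := x)]

lemma exists_nondegenerate_decomposition (X : SSet) {n : ℕ} (x : X _⦋n⦌) :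
    ∃ (k : ℕ) (ε : (⦋n⦌ : SimplexCategory) ⟶ ⦋k⦌) (y : X _⦋k⦌),
      k ≤ n ∧ ¬ IsDegen X y ∧ Function.Surjective ε.toOrderHom ∧ x = X.map ε.op y := by
  obtain ⟨k, ε, _, ⟨y, hy⟩, rfl⟩ := X.exists_nonDegenerate x
  refine ⟨k, ε, y, SimplexCategory.len_le_of_epi ε, ?_,
    SimplexCategory.epi_iff_surjective.mp inferInstance, rfl⟩
  rwa [isDegen_iff_mem_degenerate]

/-- Eilenberg–Zilber lemma: every `n`-simplex `x` is uniquely of the form `y ε` with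
`y` a nondegenerate `k`-simplex, `k ≤ n`, and `ε : [n] → [k]` an epimorphism of `Δ`. -/
theorem eilenberg_zilber (X : SSet) (n : ℕ) (x : X _⦋n⦌) :
    ∃! p : Σ k : ℕ, X _⦋k⦌ × ((⦋n⦌ : SimplexCategory) ⟶ ⦋k⦌),
      p.1 ≤ n ∧ ¬ IsDegen X p.2.1 ∧ Function.Surjective p.2.2.toOrderHom ∧
        x = X.map p.2.2.op p.2.1 := by
  obtain ⟨k, ε, y, hk, hy, hε, hx⟩ := exists_nondegenerate_decomposition X x
  refine ⟨⟨k, y, ε⟩, ⟨hk, hy, hε, hx⟩, ?_⟩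
  rintro ⟨k', y', ε'⟩ ⟨-, hy', hε', hx'⟩
  rw [isDegen_iff_mem_degenerate, ← SSet.mem_nonDegenerate_iff_notMem_degenerate] at hy hy'
  have : Epi ε := SimplexCategory.epi_iff_surjective.mpr hε
  have : Epi ε' := SimplexCategory.epi_iff_surjective.mpr hε'
  obtain rfl : k' = k :=
    X.unique_nonDegenerate_dim x ε' ⟨y', hy'⟩ hx' ε ⟨y, hy⟩ hx
  have hy_eq : y' = y := congrArg Subtype.val <|
    X.unique_nonDegenerate_simplex x ε' ⟨y', hy'⟩ hx' ε ⟨y, hy⟩ hx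
  have hε_eq : ε' = ε := X.unique_nonDegenerate_map x ε' ⟨y', hy'⟩ hx' ε ⟨y, hy⟩ hx
  rw [hy_eq, hε_eq]

end AufhebungSSet
end

section
/- Let X be a simplicial set and x an n-simplex of X. The number of ordinals i with 0 ≤ i ≤ n−1 that properly reduce x is exactly dgn(x). -/
/-!
By the Eilenberg–Zilber lemma, `x = y ε` for a nondegenerate `y ∈ X_m` and an epimorphism
`ε : [n+1] → [m]`, both unique; in particular `dgn x = n + 1 - m`. Since `δᵢ σᵢ = id`, `i` properly
reduces `x` iff `x` lies in the image of `σᵢ`, and by uniqueness this happens iff `ε` factors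
through `σᵢ`, i.e. iff `ε i = ε (i + 1)`. An epimorphism `[n+1] → [m]` rises by exactly one at
`m` of its `n + 1` steps, so it is flat at the remaining `n + 1 - m`.
-/

open CategoryTheory Simplicial

namespace AufhebungSSet

open SimplexCategory

section Flats

variable {n m : ℕ} (ε : ⦋n + 1⦌ ⟶ ⦋m⦌)

def flats : Set (Fin (n + 1)) := {i | ε.toOrderHom i.castSucc = ε.toOrderHom i.succ}

lemma apply_zero_of_epi [Epi ε] : ε.toOrderHom 0 = 0 := by
  obtain ⟨a, ha⟩ := epi_iff_surjective.mp ‹Epi ε› 0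
  exact le_antisymm (ha ▸ ε.toOrderHom.monotone (Fin.zero_le a)) (Fin.zero_le _)

lemma exists_notMem_flats_of_apply_eq [Epi ε] {j : Fin (m + 1)} (hj : j ≠ 0) (a : Fin (n + 2))
    (ha : ε.toOrderHom a = j) : ∃ i ∉ flats ε, ε.toOrderHom i.succ = j := by
  induction a using Fin.induction with
  | zero => exact absurd (ha.symm.trans (apply_zero_of_epi ε)) hj
  | succ i ih =>
    by_cases hi : ε.toOrderHom i.castSucc = j
    · exact ih hi
    · exact ⟨i, fun h => hi (h.trans ha), ha⟩

lemma ncard_compl_flats [Epi ε] : (flats ε)ᶜ.ncard = m := by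
  have hmono (i : Fin (n + 1)) : ε.toOrderHom i.castSucc ≤ ε.toOrderHom i.succ :=
    ε.toOrderHom.monotone (Fin.castSucc_le_succ i)
  have himage : (fun i => ε.toOrderHom i.succ) '' (flats ε)ᶜ = {0}ᶜ := by
    ext j
    constructor
    · rintro ⟨i, hi, rfl⟩ (h0 : ε.toOrderHom i.succ = 0)
      exact hi (le_antisymm (h0 ▸ hmono i) (h0 ▸ Fin.zero_le _))
    · intro hj
      obtain ⟨a, ha⟩ := epi_iff_surjective.mp ‹Epi ε› j
      exact exists_notMem_flats_of_apply_eq ε hj a ha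
  have hinj : Set.InjOn (fun i => ε.toOrderHom i.succ) (flats ε)ᶜ := by
    have hlt {i i' : Fin (n + 1)} (h : i < i') (hi' : i' ∉ flats ε) :
        ε.toOrderHom i.succ < ε.toOrderHom i'.succ :=
      (ε.toOrderHom.monotone (Fin.succ_le_castSucc_iff.mpr h)).trans_lt
        ((hmono i').lt_of_ne hi')
    intro i hi i' hi' h
    rcases lt_trichotomy i i' with h' | h' | h'
    · exact absurd h (hlt h' hi').ne
    · exact h'
    · exact absurd h (hlt h' hi).ne'
  rw [← hinj.ncard_image, himage, Set.ncard_compl, Set.ncard_singleton,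
    Nat.card_eq_fintype_card, Fintype.card_fin, Nat.add_sub_cancel]

lemma ncard_flats [Epi ε] : (flats ε).ncard = n + 1 - m := by
  have h := Set.ncard_add_ncard_compl (flats ε)
  rw [ncard_compl_flats, Nat.card_eq_fintype_card, Fintype.card_fin] at h
  omega

end Flats

section Simplices

variable {X : SSet}

lemma properlyReduces_iff_mem_range_σ {n : ℕ} (i : Fin (n + 1)) (x : X _⦋n + 1⦌) :
    ProperlyReduces X i x ↔ x ∈ Set.range (X.σ i) := by
  refine ⟨fun h => ⟨_, h.symm⟩, ?_⟩
  rintro ⟨z, rfl⟩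
  exact congrArg (X.σ i) (X.δ_comp_σ_self_apply i z).symm

lemma dgn_eq_of_nonDegenerate {n m : ℕ} {x : X _⦋n⦌} (ε : ⦋n⦌ ⟶ ⦋m⦌) [Epi ε]
    (y : X.nonDegenerate m) (hx : x = X.map ε.op y) : dgn X x = n - m := by
  unfold dgn
  congr 1
  refine le_antisymm (Nat.sInf_le ⟨ε, epi_iff_surjective.mp ‹_›, y, hx⟩)
    (le_csInf ⟨m, ε, epi_iff_surjective.mp ‹_›, y, hx⟩ ?_)
  rintro k ⟨ε', hε', y', rfl⟩
  have : Epi ε' := epi_iff_surjective.mpr hε'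
  obtain ⟨p, η, _, z, rfl⟩ := X.exists_nonDegenerate y'
  have hp : m = p := X.unique_nonDegenerate_dim _ ε y hx (ε' ≫ η) z
    (by rw [op_comp, Functor.map_comp_apply])
  exact hp ▸ le_of_epi η

lemma mem_range_σ_iff_mem_flats {n m : ℕ} {x : X _⦋n + 1⦌} (ε : ⦋n + 1⦌ ⟶ ⦋m⦌) [Epi ε]
    (y : X.nonDegenerate m) (hx : x = X.map ε.op y) (i : Fin (n + 1)) :
    x ∈ Set.range (X.σ i) ↔ i ∈ flats ε := by
  constructor
  · rintro ⟨z, rfl⟩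
    obtain ⟨p, η, _, w, rfl⟩ := X.exists_nonDegenerate z
    have hp : m = p := X.unique_nonDegenerate_dim _ ε y hx (σ i ≫ η) w
      (by rw [op_comp, Functor.map_comp_apply]; rfl)
    subst hp
    have hε : ε = σ i ≫ η := X.unique_nonDegenerate_map _ ε y hx (σ i ≫ η) w
      (by rw [op_comp, Functor.map_comp_apply]; rfl)
    subst hε
    simp [flats, σ]
  · intro hi
    obtain ⟨θ, hθ⟩ := eq_σ_comp_of_not_injective' ε i hi
    exact ⟨X.map θ.op y, by rw [hx, hθ, op_comp, Functor.map_comp_apply]; rfl⟩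

end Simplices

/-- An `n`-simplex is properly reduced by exactly `dgn x` ordinals `0 ≤ i ≤ n-1`
(for `n = 0` there are no such ordinals and `dgn x = 0`). -/
theorem card_properlyReduces (X : SSet) :
    (∀ x : X _⦋0⦌, dgn X x = 0) ∧
    (∀ (n : ℕ) (x : X _⦋n + 1⦌),
      Set.ncard (setOf fun i : Fin (n + 1) => ProperlyReduces X i x) = dgn X x) := by
  refine ⟨fun x => Nat.zero_sub _, fun n x => ?_⟩
  obtain ⟨m, ε, _, y, hx⟩ := X.exists_nonDegenerate x
  rw [dgn_eq_of_nonDegenerate ε y hx, ← ncard_flats ε]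
  congr 1
  ext i
  exact (properlyReduces_iff_mem_range_σ i x).trans (mem_range_σ_iff_mem_flats ε y hx i)

end AufhebungSSet
end

section
/- Let X be a simplicial set and x an n-simplex of X. If an ordinal i with 0 ≤ i ≤ n−1 properly reduces x, then i+1 reduces x. -/
open CategoryTheory Simplicial

namespace AufhebungSSet

/-!
If `x = y σᵢ` with `y = x δᵢ`, the simplicial identity `σᵢ δᵢ₊₁ = id` gives `x δᵢ₊₁ = y`, so
it suffices that `dgn (y σᵢ) = dgn y + 1`. This holds because acting by an epimorphism of `Δ`
does not change the least dimension from which a simplex is the image of an epimorphism.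
-/
def epiDims (X : SSet) {n : ℕ} (x : X _⦋n⦌) : Set ℕ :=
  {k | ∃ ε : (⦋n⦌ : SimplexCategory) ⟶ ⦋k⦌,
    Function.Surjective ε.toOrderHom ∧ ∃ y : X _⦋k⦌, x = X.map ε.op y}

section epiDims

variable {X : SSet}

lemma dgn_eq_sub_sInf_epiDims {n : ℕ} (x : X _⦋n⦌) : dgn X x = n - sInf (epiDims X x) := rfl

lemma len_mem_epiDims {n : ℕ} {Δ : SimplexCategory} (ε : ⦋n⦌ ⟶ Δ) [Epi ε]
    (y : X.obj (Opposite.op Δ)) : Δ.len ∈ epiDims X (X.map ε.op y) :=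
  ⟨ε, SimplexCategory.epi_iff_surjective.mp ‹_›, y, rfl⟩

lemma self_mem_epiDims {n : ℕ} (x : X _⦋n⦌) : n ∈ epiDims X x := by
  simpa using len_mem_epiDims (𝟙 ⦋n⦌) x

lemma sInf_epiDims_le {n : ℕ} (x : X _⦋n⦌) : sInf (epiDims X x) ≤ n :=
  Nat.sInf_le (self_mem_epiDims x)

/-- Factor `f ≫ ε` through its image: an epimorphism followed by a monomorphism,
which cannot raise the dimension. -/
lemma sInf_epiDims_map_le_of_mem {m n k : ℕ} (f : ⦋m⦌ ⟶ ⦋n⦌) {x : X _⦋n⦌}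
    (hk : k ∈ epiDims X x) : sInf (epiDims X (X.map f.op x)) ≤ k := by
  obtain ⟨ε, -, w, rfl⟩ := hk
  have hw : X.map f.op (X.map ε.op w) =
      X.map (Limits.factorThruImage (f ≫ ε)).op (X.map (Limits.image.ι (f ≫ ε)).op w) := by
    simp only [← Functor.map_comp_apply, ← op_comp, Limits.image.fac]
  rw [hw]
  exact (Nat.sInf_le (len_mem_epiDims _ _)).trans
    (SimplexCategory.len_le_of_mono (Limits.image.ι (f ≫ ε)))

lemma sInf_epiDims_map_le {m n : ℕ} (f : ⦋m⦌ ⟶ ⦋n⦌) (x : X _⦋n⦌) :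
    sInf (epiDims X (X.map f.op x)) ≤ sInf (epiDims X x) :=
  sInf_epiDims_map_le_of_mem f (Nat.sInf_mem ⟨n, self_mem_epiDims x⟩)

lemma sInf_epiDims_map_epi_le_of_mem {m n k : ℕ} (ε : ⦋m⦌ ⟶ ⦋n⦌) [Epi ε] {y : X _⦋n⦌}
    (hk : k ∈ epiDims X y) : sInf (epiDims X (X.map ε.op y)) ≤ k := by
  obtain ⟨ε', hε', w, rfl⟩ := hk
  have : Epi ε' := SimplexCategory.epi_iff_surjective.mpr hε'
  rw [← Functor.map_comp_apply, ← op_comp]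
  exact Nat.sInf_le (len_mem_epiDims _ w)

/-- Epimorphisms of `Δ` split, so `y` is recovered from `y ε` by a face operator. -/
lemma sInf_epiDims_map_epi {m n : ℕ} (ε : ⦋m⦌ ⟶ ⦋n⦌) [Epi ε] (y : X _⦋n⦌) :
    sInf (epiDims X (X.map ε.op y)) = sInf (epiDims X y) := by
  refine le_antisymm
    (sInf_epiDims_map_epi_le_of_mem ε (Nat.sInf_mem ⟨n, self_mem_epiDims y⟩)) ?_
  have : IsSplitEpi ε := isSplitEpi_of_epi ε
  have hy : X.map (section_ ε).op (X.map ε.op y) = y := by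
    rw [← Functor.map_comp_apply, ← op_comp, IsSplitEpi.id, op_id,
      Functor.map_id_apply]
  simpa only [hy] using sInf_epiDims_map_le (section_ ε) (X.map ε.op y)

lemma dgn_map_epi {m n : ℕ} (ε : ⦋m⦌ ⟶ ⦋n⦌) [Epi ε] (y : X _⦋n⦌) :
    dgn X (X.map ε.op y) = dgn X y + (m - n) := by
  rw [dgn_eq_sub_sInf_epiDims, dgn_eq_sub_sInf_epiDims, sInf_epiDims_map_epi]
  have hmn : n ≤ m := SimplexCategory.len_le_of_epi ε
  have := sInf_epiDims_le y
  omega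

end epiDims

/-- If `i` properly reduces `x`, then `i + 1` reduces `x`. -/
theorem reduces_succ_of_properlyReduces (X : SSet) (n : ℕ) (x : X _⦋n + 1⦌)
    (i : Fin (n + 1)) (h : ProperlyReduces X i x) :
    Reduces X i.succ x := by
  set y := X.map (SimplexCategory.δ i.castSucc).op x
  have hx : x = X.map (SimplexCategory.σ i).op y := h
  have hxδ : X.map (SimplexCategory.δ i.succ).op x = y := by
    rw [hx, ← Functor.map_comp_apply, ← op_comp, SimplexCategory.δ_comp_σ_succ, op_id,
      Functor.map_id_apply]
  rw [Reduces, hxδ, hx, dgn_map_epi (SimplexCategory.σ i)]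
  omega

end AufhebungSSet
end

section
/- Let X be a simplicial set and let c be a k-sphere in X (k ≥ 1) with all faces c_0, …, c_k degenerate. Let r be the minimal value of dgn(c_i) over 0 ≤ i ≤ k and let m be the smallest ordinal with dgn(c_m) = r. If an ordinal j reduces c_m, then c_{j+1} = c_m σ_m δ_{j+1}. -/
open CategoryTheory Simplicial

namespace AufhebungSSet

/-!
Write `baseDim x = n - dgn x` for the dimension of the nondegenerate simplex underlying `x`;
faces never increase it. Then `c_m` is the first face of the sphere with maximal `baseDim`, and
`j` reduces `c_m` exactly when `c_m δ_j` keeps that `baseDim`. A face keeps `baseDim` only where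
the epimorphism of `x` identifies the deleted vertex with a neighbour, so that
`x = x δ_j σ_q` with `q ∈ {j - 1, j}`. The cycle equations move such faces between the `c_i`,
and minimality of `m` rules out `j < m` and `q = m - 1`; hence `c_{j+1} = c_m δ_j σ_m`, which
is `c_m σ_m δ_{j+1}` by the simplicial identities.
-/

open SimplexCategory Limits

noncomputable def baseDim (X : SSet) {n : ℕ} (x : X _⦋n⦌) : ℕ :=
  sInf (Set.ofPred fun k : ℕ => ∃ ε : (⦋n⦌ : SimplexCategory) ⟶ ⦋k⦌,
    Function.Surjective ε.toOrderHom ∧ ∃ y : X _⦋k⦌, x = X.map ε.op y)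

lemma dgn_eq_sub_baseDim (X : SSet) {n : ℕ} (x : X _⦋n⦌) : dgn X x = n - baseDim X x := rfl

variable {X : SSet}

lemma map_op_comp_apply {a b d : SimplexCategory} (f : a ⟶ b) (g : b ⟶ d)
    (x : X.obj (Opposite.op d)) : X.map (f ≫ g).op x = X.map f.op (X.map g.op x) := by
  rw [op_comp, Functor.map_comp_apply]

lemma map_δ_castSucc_map_σ {n : ℕ} (i : Fin (n + 1)) (z : X _⦋n⦌) :
    X.map (δ i.castSucc).op (X.map (σ i).op z) = z := by
  rw [← map_op_comp_apply, δ_comp_σ_self, op_id, Functor.map_id_apply]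

section baseDim

variable {n : ℕ}

lemma baseDim_le {b : ℕ} {x : X _⦋n⦌} (ε : (⦋n⦌ : SimplexCategory) ⟶ ⦋b⦌)
    (hε : Function.Surjective ε.toOrderHom) (y : X _⦋b⦌) (h : x = X.map ε.op y) :
    baseDim X x ≤ b :=
  Nat.sInf_le ⟨ε, hε, y, h⟩

lemma baseDim_le_self (x : X _⦋n⦌) : baseDim X x ≤ n :=
  baseDim_le (𝟙 _) Function.surjective_id x (by simp)

lemma exists_surjective_eq_map_baseDim (x : X _⦋n⦌) :
    ∃ ε : (⦋n⦌ : SimplexCategory) ⟶ ⦋baseDim X x⦌, Function.Surjective ε.toOrderHom ∧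
      ∃ y : X _⦋baseDim X x⦌, x = X.map ε.op y := by
  have hne : ∃ k, ∃ ε : (⦋n⦌ : SimplexCategory) ⟶ ⦋k⦌, Function.Surjective ε.toOrderHom ∧
      ∃ y : X _⦋k⦌, x = X.map ε.op y :=
    ⟨n, 𝟙 _, Function.surjective_id, x, by simp⟩
  exact Nat.sInf_mem hne

lemma baseDim_map_le {b : ℕ} (θ : (⦋n⦌ : SimplexCategory) ⟶ ⦋b⦌) (y : X _⦋b⦌) :
    baseDim X (X.map θ.op y) ≤ b := by
  have hle : baseDim X (X.map θ.op y) ≤ (image θ).len :=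
    baseDim_le (factorThruImage θ) (epi_iff_surjective.mp inferInstance)
      (X.map (image.ι θ).op y) (by rw [← map_op_comp_apply, image.fac])
  exact hle.trans (len_le_of_mono (image.ι θ))

lemma baseDim_map_lt {b : ℕ} (θ : (⦋n⦌ : SimplexCategory) ⟶ ⦋b⦌) (y : X _⦋b⦌)
    (hθ : ¬ Function.Surjective θ.toOrderHom) : baseDim X (X.map θ.op y) < b := by
  cases b with
  | zero => exact absurd (fun _ => ⟨0, Subsingleton.elim (α := Fin 1) _ _⟩) hθ
  | succ b =>
    obtain ⟨i, θ', rfl⟩ := eq_comp_δ_of_not_surjective θ hθ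
    rw [map_op_comp_apply]
    exact Nat.lt_succ_of_le (baseDim_map_le θ' _)

lemma baseDim_face_le (x : X _⦋n + 1⦌) (i : Fin (n + 2)) :
    baseDim X (X.map (δ i).op x) ≤ baseDim X x := by
  obtain ⟨ε, -, y, hy⟩ := exists_surjective_eq_map_baseDim x
  have hle := baseDim_map_le (δ i ≫ ε) y
  rwa [map_op_comp_apply, ← hy] at hle

lemma baseDim_face_eq_of_reduces {x : X _⦋n + 1⦌} {j : Fin (n + 2)} (h : Reduces X j x) :
    baseDim X (X.map (δ j).op x) = baseDim X x := by
  have hface := baseDim_face_le x j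
  have hself := baseDim_le_self (X.map (δ j).op x)
  have h' : n - baseDim X (X.map (δ j).op x) + 1 = n + 1 - baseDim X x := h
  omega

end baseDim

theorem _root_.Monotone.exists_adjacent_apply_eq {α : Type*} [PartialOrder α] {n : ℕ}
    {f : Fin (n + 2) → α} (hf : Monotone f) {t j : Fin (n + 2)} (htj : t ≠ j) (h : f t = f j) :
    ∃ q : Fin (n + 1), (q.castSucc = j ∨ q.succ = j) ∧ f q.castSucc = f q.succ := by
  rcases htj.lt_or_gt with htj | hjt
  · obtain ⟨q, rfl⟩ := Fin.exists_succ_eq.mpr (Fin.ne_zero_of_lt htj)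
    refine ⟨q, Or.inr rfl, le_antisymm (hf (Fin.castSucc_le_succ q)) ?_⟩
    exact h ▸ hf (Fin.le_castSucc_iff.mpr htj)
  · obtain ⟨q, rfl⟩ := Fin.exists_castSucc_eq.mpr (Fin.ne_last_of_lt hjt)
    refine ⟨q, Or.inl rfl, le_antisymm (hf (Fin.castSucc_le_succ q)) ?_⟩
    exact h ▸ hf (Fin.castSucc_lt_iff_succ_le.mp hjt)

theorem exists_eq_map_σ_of_baseDim_face_eq {n : ℕ} {x : X _⦋n + 1⦌} {j : Fin (n + 2)}
    (h : baseDim X (X.map (δ j).op x) = baseDim X x) :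
    ∃ q : Fin (n + 1), (q.castSucc = j ∨ q.succ = j) ∧
      x = X.map (σ q).op (X.map (δ j).op x) := by
  obtain ⟨ε, hε, y, hy⟩ := exists_surjective_eq_map_baseDim x
  have hsurj : Function.Surjective (δ j ≫ ε).toOrderHom := by
    by_contra hns
    have hlt := baseDim_map_lt (δ j ≫ ε) y hns
    rw [map_op_comp_apply, ← hy, h] at hlt
    exact lt_irrefl _ hlt
  -- `j` has another preimage under `ε`, hence (by monotonicity) an adjacent one
  obtain ⟨t, ht⟩ := hsurj (ε.toOrderHom j)
  obtain ⟨q, hqj, hq⟩ := ε.toOrderHom.monotone.exists_adjacent_apply_eq (Fin.succAbove_ne j t) ht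
  obtain ⟨ε', rfl⟩ := eq_σ_comp_of_not_injective' ε q hq
  have hδσ : δ j ≫ σ q = 𝟙 _ := by
    rcases hqj with rfl | rfl
    · exact δ_comp_σ_self
    · exact δ_comp_σ_succ
  refine ⟨q, hqj, ?_⟩
  rw [hy, ← map_op_comp_apply, ← map_op_comp_apply, Category.assoc, reassoc_of% hδσ]

section sphere

variable {K : ℕ} {c : Fin (K + 3) → X _⦋K + 1⦌} {m : Fin (K + 3)}

lemma le_of_baseDim_face_eq (hm : IsLeast {u | ∀ v, baseDim X (c v) ≤ baseDim X (c u)} m)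
    {u : Fin (K + 3)} {i : Fin (K + 2)}
    (h : baseDim X (X.map (δ i).op (c u)) = baseDim X (c m)) : m ≤ u :=
  hm.2 fun v => (hm.1 v).trans (h ▸ baseDim_face_le (c u) i)

lemma le_castSucc_of_baseDim_face_eq (hc : IsSphere X c)
    (hm : IsLeast {u | ∀ v, baseDim X (c v) ≤ baseDim X (c u)} m) {i k : Fin (K + 2)}
    (hik : i ≤ k) (h : baseDim X (X.map (δ i).op (c k.succ)) = baseDim X (c m)) :
    m ≤ i.castSucc :=
  le_of_baseDim_face_eq hm (hc i k hik ▸ h)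

lemma exists_castSucc_eq_of_baseDim_face_eq (hc : IsSphere X c)
    (hm : IsLeast {u | ∀ v, baseDim X (c v) ≤ baseDim X (c u)} m) {u : Fin (K + 3)}
    {i : Fin (K + 2)} (hiu : i.castSucc ≤ u) (him : i.castSucc ≤ m)
    (h : baseDim X (X.map (δ i).op (c u)) = baseDim X (c m)) :
    ∃ q : Fin (K + 1), q.castSucc = i ∧ c u = X.map (σ q).op (X.map (δ i).op (c u)) := by
  have hmax : baseDim X (X.map (δ i).op (c u)) = baseDim X (c u) :=
    le_antisymm (baseDim_face_le _ _) (h ▸ hm.1 u)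
  obtain ⟨q, hqi | hqi, hq⟩ := exists_eq_map_σ_of_baseDim_face_eq hmax
  · exact ⟨q, hqi, hq⟩
  -- otherwise `c u δ_{i-1} = c u δ_i`, which the cycle equations turn into a face of `c_{i-1}`
  subst hqi
  obtain ⟨k, rfl⟩ :=
    Fin.exists_succ_eq.mpr (Fin.ne_zero_of_lt (hiu.trans_lt' (Fin.castSucc_pos q.succ_pos)))
  have hface : X.map (δ q.castSucc).op (c k.succ) = X.map (δ q.succ).op (c k.succ) := by
    rw [hq, map_δ_castSucc_map_σ, ← hq]
  have hqk : q.castSucc ≤ k := by simpa [Fin.le_def] using hiu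
  have hmq := le_castSucc_of_baseDim_face_eq hc hm hqk (hface ▸ h)
  simp only [Fin.le_def, Fin.val_castSucc, Fin.val_succ] at him hmq
  omega

end sphere

theorem face_succ_eq_of_baseDim_face_eq {K : ℕ} {c : Fin (K + 3) → X _⦋K + 1⦌}
    {m : Fin (K + 3)} (hc : IsSphere X c)
    (hm : IsLeast {u | ∀ v, baseDim X (c v) ≤ baseDim X (c u)} m) {j : Fin (K + 2)}
    (hj : baseDim X (X.map (δ j).op (c m)) = baseDim X (c m)) :
    ∃ h : (m : ℕ) < K + 2, c j.succ = X.map (δ j.succ).op (X.map (σ ⟨m, h⟩).op (c m)) := by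
  -- for `j < m` the cycle equation `c_m δ_j = c_j δ_{m-1}` contradicts the minimality of `m`
  have hmj : m ≤ j.castSucc := by
    by_contra! hjm
    obtain ⟨b, rfl⟩ := Fin.exists_succ_eq.mpr (Fin.ne_zero_of_lt hjm)
    exact hjm.not_ge (le_castSucc_of_baseDim_face_eq hc hm (Fin.castSucc_lt_succ_iff.mp hjm) hj)
  obtain ⟨m, rfl⟩ := Fin.exists_castSucc_eq.mpr (hmj.trans_lt (Fin.castSucc_lt_last j)).ne
  rw [Fin.castSucc_le_castSucc_iff] at hmj
  refine ⟨m.isLt, ?_⟩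
  change c j.succ = X.map (δ j.succ).op (X.map (σ m).op (c m.castSucc))
  have hsph := hc m j hmj
  obtain ⟨q, rfl, hcj⟩ := exists_castSucc_eq_of_baseDim_face_eq hc hm
    ((Fin.castSucc_le_castSucc_iff.mpr hmj).trans (Fin.castSucc_le_succ j)) le_rfl (hsph ▸ hj)
  rw [hsph] at hcj
  rcases hmj.eq_or_lt with rfl | hlt
  · obtain ⟨q', hq', hcm⟩ := exists_castSucc_eq_of_baseDim_face_eq hc hm le_rfl le_rfl hj
    rw [Fin.castSucc_injective _ hq'] at hcm
    rw [hcj, ← hcm, ← map_op_comp_apply, δ_comp_σ_succ, op_id, Functor.map_id_apply]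
  · rw [hcj, ← map_op_comp_apply, ← map_op_comp_apply, δ_comp_σ_of_gt hlt]

theorem techlem_b_general (X : SSet) (K : ℕ) (c : Fin (K + 3) → X _⦋K + 1⦌) (hc : IsSphere X c)
    (r : ℕ) (hr : ∀ u : Fin (K + 3), r ≤ dgn X (c u))
    (m : Fin (K + 3)) (hm : dgn X (c m) = r)
    (hmmin : ∀ u : Fin (K + 3), dgn X (c u) = r → m ≤ u)
    (j : Fin (K + 2)) (hj : Reduces X j (c m)) :
    ∃ h : (m : ℕ) < K + 2,
      c j.succ = X.map (SimplexCategory.δ j.succ).op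
        (X.map (SimplexCategory.σ ⟨(m : ℕ), h⟩).op (c m)) := by
  simp only [dgn_eq_sub_baseDim] at hr hm hmmin
  have hle (u : Fin (K + 3)) : baseDim X (c u) ≤ K + 1 := baseDim_le_self _
  have hmax : IsLeast {u | ∀ v, baseDim X (c v) ≤ baseDim X (c u)} m := by
    refine ⟨fun v => ?_, fun u hu => hmmin u ?_⟩
    · have := hr v; have := hle v; omega
    · have := hr u; have := hu m; have := hle u; omega
  exact face_succ_eq_of_baseDim_face_eq hc hmax (baseDim_face_eq_of_reduces hj)

/-- If all faces of a sphere `c` are degenerate, `r` is the minimal degeneracy,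
`m` is the first face of degeneracy `r`, and `j` reduces `c_m`, then
`c_{j+1} = c_m σ_m δ_{j+1}`. -/
theorem techlem_b (X : SSet) (K : ℕ) (c : Fin (K + 3) → X _⦋K + 1⦌) (hc : IsSphere X c)
    (r : ℕ) (hr : ∀ u : Fin (K + 3), r ≤ dgn X (c u))
    (m : Fin (K + 3)) (hm : dgn X (c m) = r)
    (hmmin : ∀ u : Fin (K + 3), dgn X (c u) = r → m ≤ u)
    (hdeg : ∀ u : Fin (K + 3), IsDegen X (c u))
    (j : Fin (K + 2)) (hj : Reduces X j (c m)) :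
    ∃ h : (m : ℕ) < K + 2,
      c j.succ = X.map (SimplexCategory.δ j.succ).op
        (X.map (SimplexCategory.σ ⟨(m : ℕ), h⟩).op (c m)) :=
  techlem_b_general X K c hc r hr m hm hmmin j hj

end AufhebungSSet
end

section
/- Let X be a simplicial set and let c be a k-sphere in X (k ≥ 1) with all faces c_0, …, c_k degenerate. Let r be the minimal value of dgn(c_i) over 0 ≤ i ≤ k and let m be the smallest ordinal with dgn(c_m) = r. Then there are at least r+2 ordinals u with 0 ≤ u ≤ k such that dgn(c_u) = r and c_u = c_m σ_m δ_u. -/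
open CategoryTheory Simplicial

namespace AufhebungSSet

/-!
Write `c_m = z ε` with `z` nondegenerate and `ε` an epimorphism of `Δ`. Every `q` with
`ε q = ε (q + 1)` exhibits `c_m` as a degeneracy `y σ_q`, so that both `δ_q` and `δ_{q+1}` lower
its degeneracy; there are at least `r` such `q`, hence at least `r + 1` faces `p` with
`dgn (c_m δ_p) = r - 1`. None of them lies below `m`, since there the cycle equations give
`c_m δ_p = c_p δ_{m-1}`, of degeneracy at least `dgn c_p - 1 ≥ r`. For each such `p ≥ m` the cycle
equation `c_{p+1} δ_m = c_m δ_p` forces `dgn c_{p+1} = r` and makes `m` the first face lowering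
`c_{p+1}`; the first face lowering a simplex always splits off a degeneracy, so
`c_{p+1} = c_{p+1} δ_m σ_m = c_m δ_p σ_m = c_m σ_m δ_{p+1}`. With `c_m` itself these are
`r + 2` faces.
-/

open SimplexCategory Limits

lemma exists_adjacent_eq_of_eq {α : Type*} [PartialOrder α] {n : ℕ} {f : Fin (n + 2) → α}
    (hf : Monotone f) {a p : Fin (n + 2)} (hap : a ≠ p) (h : f a = f p) :
    ∃ q : Fin (n + 1), f q.castSucc = f q.succ ∧ (p = q.castSucc ∨ p = q.succ) := by
  rcases hap.lt_or_gt with hlt | hlt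
  · have hp : p ≠ 0 := (Fin.zero_le a).trans_lt hlt |>.ne'
    refine ⟨p.pred hp, le_antisymm (hf Fin.castSucc_lt_succ.le) ?_, .inr (Fin.succ_pred p hp).symm⟩
    rw [Fin.succ_pred, ← h]
    exact hf ((Fin.le_castSucc_pred_iff hp).2 hlt)
  · have hp : p ≠ Fin.last _ := (hlt.trans_le (Fin.le_last a)).ne
    refine ⟨p.castPred hp, le_antisymm (hf Fin.castSucc_lt_succ.le) ?_,
      .inl (Fin.castSucc_castPred p hp).symm⟩
    rw [Fin.castSucc_castPred, ← h]
    exact hf ((Fin.succ_castPred_le_iff hp).2 hlt)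

lemma le_add_ncard_castSucc_eq_succ {n k : ℕ} {f : Fin (n + 2) → Fin (k + 1)} (hf : Monotone f) :
    n + 1 ≤ k + {q | f (Fin.castSucc q) = f q.succ}.ncard := by
  have hlt {q : Fin (n + 1)} (hq : f q.castSucc ≠ f q.succ) : f q.castSucc < f q.succ :=
    (hf Fin.castSucc_lt_succ.le).lt_of_ne hq
  have hjumps : {q | f (Fin.castSucc q) = f q.succ}ᶜ.ncard ≤ ({f 0}ᶜ : Set _).ncard := by
    refine Set.ncard_le_ncard_of_injOn (fun q => f q.succ) (fun q hq => ?_) ?_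
    · exact ((hf (Fin.zero_le _)).trans_lt (hlt hq)).ne'
    · exact StrictMonoOn.injOn fun a _ b hb hab =>
        (hf (Fin.succ_le_castSucc_iff.2 hab)).trans_lt (hlt hb)
  have h₁ := Set.ncard_add_ncard_compl {q | f (Fin.castSucc q) = f q.succ}
  have h₂ := Set.ncard_add_ncard_compl {f 0}
  simp only [Nat.card_eq_fintype_card, Fintype.card_fin, Set.ncard_singleton] at h₁ h₂
  omega

variable {X : SSet}

lemma sub_le_dgn_map_of_epi {n k : ℕ} (f : ⦋n⦌ ⟶ ⦋k⦌) [Epi f] (y : X _⦋k⦌) :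
    n - k ≤ dgn X (X.map f.op y) := by
  unfold dgn
  apply Nat.sub_le_sub_left
  exact Nat.sInf_le ⟨f, epi_iff_surjective.1 ‹_›, y, rfl⟩

lemma sub_le_dgn_map {n k : ℕ} (θ : ⦋n⦌ ⟶ ⦋k⦌) (y : X _⦋k⦌) :
    n - k ≤ dgn X (X.map θ.op y) := by
  rw [← image.fac θ, op_comp, Functor.map_comp_apply]
  exact (Nat.sub_le_sub_left (len_le_of_mono (image.ι θ)) n).trans
    (sub_le_dgn_map_of_epi (k := (image θ).len) (factorThruImage θ) _)

lemma add_one_sub_le_dgn_map_of_not_surjective {n k : ℕ} (θ : ⦋n⦌ ⟶ ⦋k⦌)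
    (hθ : ¬ Function.Surjective θ.toOrderHom) (y : X _⦋k⦌) :
    n + 1 - k ≤ dgn X (X.map θ.op y) := by
  cases k with
  | zero => exact absurd (fun b => ⟨0, Subsingleton.elim (α := Fin 1) _ b⟩) hθ
  | succ k =>
    obtain ⟨i, θ', rfl⟩ := eq_comp_δ_of_not_surjective θ hθ
    rw [op_comp, Functor.map_comp_apply]
    have := sub_le_dgn_map θ' (X.map (δ i).op y)
    omega

lemma dgn_map_of_nonDegenerate {n k : ℕ} (f : ⦋n⦌ ⟶ ⦋k⦌) [Epi f] (y : X.nonDegenerate k) :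
    dgn X (X.map f.op y) = n - k := by
  refine le_antisymm (Nat.sub_le_sub_left ?_ n) (sub_le_dgn_map_of_epi f y.1)
  refine le_csInf ⟨k, f, epi_iff_surjective.1 ‹_›, y, rfl⟩ ?_
  rintro j ⟨g, hg, z, hz⟩
  obtain ⟨j', h, _, w, rfl⟩ := X.exists_nonDegenerate z
  have : Epi g := epi_iff_surjective.2 hg
  rw [← Functor.map_comp_apply, ← op_comp] at hz
  exact (X.unique_nonDegenerate_dim _ f y rfl (g ≫ h) w hz).le.trans (le_of_epi h)

lemma one_le_dgn_of_isDegen {n : ℕ} {x : X _⦋n⦌} (hx : IsDegen X x) : 1 ≤ dgn X x := by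
  obtain ⟨k, hk, f, hf, y, rfl⟩ := hx
  have : Epi f := epi_iff_surjective.2 hf
  have := sub_le_dgn_map_of_epi f y
  omega

lemma dgn_le_dgn_map_δ_add_one {n : ℕ} (x : X _⦋n + 1⦌) (p : Fin (n + 2)) :
    dgn X x ≤ dgn X (X.map (δ p).op x) + 1 := by
  obtain ⟨k, f, _, y, rfl⟩ := X.exists_nonDegenerate x
  rw [dgn_map_of_nonDegenerate, ← Functor.map_comp_apply, ← op_comp]
  have := sub_le_dgn_map (δ p ≫ f) y.1
  omega

lemma dgn_map_σ {n : ℕ} (q : Fin (n + 1)) (y : X _⦋n⦌) :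
    dgn X (X.map (σ q).op y) = dgn X y + 1 := by
  obtain ⟨k, g, _, w, rfl⟩ := X.exists_nonDegenerate y
  rw [← Functor.map_comp_apply, ← op_comp, dgn_map_of_nonDegenerate,
    dgn_map_of_nonDegenerate]
  have := le_of_epi g
  omega

lemma properlyReduces_iff {n : ℕ} {q : Fin (n + 1)} {x : X _⦋n + 1⦌} :
    ProperlyReduces X q x ↔ ∃ y, x = X.map (σ q).op y :=
  ⟨fun h => ⟨_, h⟩, by rintro ⟨y, rfl⟩; exact congrArg _ (SSet.δ_comp_σ_self_apply q y).symm⟩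

section Reduces

variable {n : ℕ} {x : X _⦋n + 1⦌}

lemma ProperlyReduces.reduces_castSucc {q : Fin (n + 1)} (h : ProperlyReduces X q x) :
    Reduces X q.castSucc x := by
  obtain ⟨y, rfl⟩ := properlyReduces_iff.1 h
  rw [Reduces, dgn_map_σ]
  exact congrArg (dgn X · + 1) (SSet.δ_comp_σ_self_apply q y)

lemma ProperlyReduces.reduces_succ {q : Fin (n + 1)} (h : ProperlyReduces X q x) :
    Reduces X q.succ x := by
  obtain ⟨y, rfl⟩ := properlyReduces_iff.1 h
  rw [Reduces, dgn_map_σ]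
  exact congrArg (dgn X · + 1) (SSet.δ_comp_σ_succ_apply q y)

lemma Reduces.exists_properlyReduces {p : Fin (n + 2)} (h : Reduces X p x) :
    ∃ q : Fin (n + 1), ProperlyReduces X q x ∧ (p = q.castSucc ∨ p = q.succ) := by
  obtain ⟨k, f, _, y, rfl⟩ := X.exists_nonDegenerate x
  have hsurj : Function.Surjective (δ p ≫ f).toOrderHom := by
    by_contra hns
    have := add_one_sub_le_dgn_map_of_not_surjective _ hns y.1
    rw [Reduces, dgn_map_of_nonDegenerate, ← Functor.map_comp_apply, ← op_comp] at h
    omega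
  obtain ⟨b, hb⟩ := hsurj (f.toOrderHom p)
  obtain ⟨q, hq, hpq⟩ := exists_adjacent_eq_of_eq f.toOrderHom.monotone (p.succAbove_ne b) hb
  obtain ⟨f', rfl⟩ := eq_σ_comp_of_not_injective' f q hq
  exact ⟨q, properlyReduces_iff.2 ⟨_, by rw [op_comp, Functor.map_comp_apply]⟩, hpq⟩

lemma Reduces.properlyReduces_of_forall_lt {i : Fin (n + 1)} (h : Reduces X i.castSucc x)
    (hlt : ∀ j < i.castSucc, ¬ Reduces X j x) : ProperlyReduces X i x := by
  obtain ⟨q, hq, hiq | hiq⟩ := h.exists_properlyReduces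
  · rwa [Fin.castSucc_injective _ hiq]
  · exact absurd hq.reduces_castSucc (hlt _ (hiq ▸ Fin.castSucc_lt_succ))

lemma dgn_le_ncard_properlyReduces (x : X _⦋n + 1⦌) :
    dgn X x ≤ {q | ProperlyReduces X q x}.ncard := by
  obtain ⟨k, f, _, y, rfl⟩ := X.exists_nonDegenerate x
  have hcollapse : {q | f.toOrderHom (Fin.castSucc q) = f.toOrderHom q.succ} ⊆
      {q | ProperlyReduces X q (X.map f.op y)} := fun q hq => by
    obtain ⟨f', rfl⟩ := eq_σ_comp_of_not_injective' f q hq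
    exact properlyReduces_iff.2 ⟨_, by rw [op_comp, Functor.map_comp_apply]⟩
  rw [dgn_map_of_nonDegenerate, Nat.sub_le_iff_le_add']
  exact (le_add_ncard_castSucc_eq_succ f.toOrderHom.monotone).trans
    (Nat.add_le_add_left (Set.ncard_le_ncard hcollapse) k)

lemma add_one_le_ncard_reduces (hx : 1 ≤ dgn X x) :
    dgn X x + 1 ≤ {p | Reduces X p x}.ncard := by
  set Q := {q | ProperlyReduces X q x}
  have hQ : dgn X x ≤ Q.ncard := dgn_le_ncard_properlyReduces x
  obtain ⟨q₀, hq₀, hmax⟩ := Set.exists_max_image Q id Q.toFinite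
    (Set.nonempty_of_ncard_ne_zero (by omega))
  have hnot : q₀.succ ∉ Fin.castSucc '' Q := by
    rintro ⟨q, hq, hqq⟩
    exact (Fin.castSucc_lt_succ_iff.2 (hmax q hq)).ne hqq
  have hsub : insert q₀.succ (Fin.castSucc '' Q) ⊆ {p | Reduces X p x} := by
    rintro p (rfl | ⟨q, hq, rfl⟩)
    exacts [hq₀.reduces_succ, hq.reduces_castSucc]
  calc dgn X x + 1 ≤ (Fin.castSucc '' Q).ncard + 1 := by
        rw [Set.ncard_image_of_injective _ (Fin.castSucc_injective _)]; omega
    _ = (insert q₀.succ (Fin.castSucc '' Q)).ncard := (Set.ncard_insert_of_notMem hnot).symm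
    _ ≤ _ := Set.ncard_le_ncard hsub

end Reduces

section Sphere

variable {K : ℕ} {c : Fin (K + 3) → X _⦋K + 1⦌}

lemma IsSphere.not_reduces_of_castSucc_lt (hc : IsSphere X c) {r : ℕ}
    (hr : ∀ u, r ≤ dgn X (c u)) {m : Fin (K + 3)} (hmmin : ∀ u, dgn X (c u) = r → m ≤ u)
    {u : Fin (K + 3)} (hmu : m ≤ u) (hu : dgn X (c u) = r) {i : Fin (K + 2)}
    (hi : i.castSucc < m) : ¬ Reduces X i (c u) := by
  intro hred
  have hu0 : u ≠ 0 := ((Fin.zero_le _).trans_lt (hi.trans_le hmu)).ne'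
  obtain ⟨j, rfl⟩ : ∃ j, j.succ = u := ⟨u.pred hu0, Fin.succ_pred u hu0⟩
  have hij : i ≤ j := Fin.castSucc_lt_succ_iff.1 (hi.trans_le hmu)
  have hci : r < dgn X (c i.castSucc) := (hr _).lt_of_ne fun h => (hmmin _ h.symm).not_gt hi
  have := dgn_le_dgn_map_δ_add_one (c i.castSucc) j
  rw [Reduces, hc i j hij] at hred
  omega

lemma IsSphere.le_castSucc_of_reduces (hc : IsSphere X c) {r : ℕ}
    (hr : ∀ u, r ≤ dgn X (c u)) {m : Fin (K + 3)} (hm : dgn X (c m) = r)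
    (hmmin : ∀ u, dgn X (c u) = r → m ≤ u) {p : Fin (K + 2)} (hp : Reduces X p (c m)) :
    m ≤ p.castSucc :=
  not_lt.1 fun h => hc.not_reduces_of_castSucc_lt hr hmmin le_rfl hm h hp

lemma IsSphere.reduces_succ_of_reduces (hc : IsSphere X c) {i p : Fin (K + 2)} (hip : i ≤ p)
    (hp : Reduces X p (c i.castSucc)) (hle : dgn X (c i.castSucc) ≤ dgn X (c p.succ)) :
    dgn X (c p.succ) = dgn X (c i.castSucc) ∧ Reduces X i (c p.succ) := by
  have hface := hc i p hip
  have := dgn_le_dgn_map_δ_add_one (c p.succ) i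
  rw [hface, hp] at this
  have heq := le_antisymm this hle
  exact ⟨heq, by rw [Reduces, hface, hp, heq]⟩

lemma IsSphere.eq_map_δ_map_σ_of_reduces (hc : IsSphere X c) {r : ℕ}
    (hr : ∀ u, r ≤ dgn X (c u)) {i : Fin (K + 1)} (hm : dgn X (c i.castSucc.castSucc) = r)
    (hmmin : ∀ u, dgn X (c u) = r → i.castSucc.castSucc ≤ u) {p : Fin (K + 2)}
    (hp : Reduces X p (c i.castSucc.castSucc)) :
    dgn X (c p.succ) = r ∧
      c p.succ = X.map (δ p.succ).op (X.map (σ i.castSucc).op (c i.castSucc.castSucc)) := by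
  have hmp := hc.le_castSucc_of_reduces hr hm hmmin hp
  have hprop : ∀ u, i.castSucc.castSucc ≤ u → dgn X (c u) = r →
      Reduces X i.castSucc (c u) → ProperlyReduces X i (c u) := fun u hmu hu hred =>
    hred.properlyReduces_of_forall_lt fun j hj =>
      hc.not_reduces_of_castSucc_lt hr hmmin hmu hu (Fin.castSucc_lt_castSucc_iff.2 hj)
  have hip : i.castSucc ≤ p := Fin.castSucc_le_castSucc_iff.1 hmp
  obtain ⟨hdgn, hred⟩ := hc.reduces_succ_of_reduces hip hp (hm.trans_le (hr _))
  rw [hm] at hdgn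
  refine ⟨hdgn, (hprop _ (hmp.trans Fin.castSucc_lt_succ.le) hdgn hred).trans ?_⟩
  rw [hc _ _ hip]
  rcases hip.lt_or_eq with hlt | rfl
  · exact (SSet.δ_comp_σ_of_gt_apply hlt _).symm
  · exact (hprop _ le_rfl hm hp).symm.trans (SSet.δ_comp_σ_succ_apply _ _).symm

end Sphere

lemma ncard_insert_image_succ {n : ℕ} {R : Set (Fin (n + 1))} {m : Fin (n + 2)}
    (hR : ∀ p ∈ R, m ≤ p.castSucc) : (insert m (Fin.succ '' R)).ncard = R.ncard + 1 := by
  have hm : m ∉ Fin.succ '' R := by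
    rintro ⟨p, hp, rfl⟩
    exact (hR p hp).not_gt Fin.castSucc_lt_succ
  rw [Set.ncard_insert_of_notMem hm, Set.ncard_image_of_injective _ (Fin.succ_injective _)]

/-- If all faces of a sphere `c` are degenerate, `r` is the minimal degeneracy, and
`m` is the first face of degeneracy `r`, then at least `r + 2` faces `c_u` satisfy
`dgn (c_u) = r` and `c_u = c_m σ_m δ_u`. -/
theorem techlem2 (X : SSet) (K : ℕ) (c : Fin (K + 3) → X _⦋K + 1⦌) (hc : IsSphere X c)
    (r : ℕ) (hr : ∀ u : Fin (K + 3), r ≤ dgn X (c u))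
    (m : Fin (K + 3)) (hm : dgn X (c m) = r)
    (hmmin : ∀ u : Fin (K + 3), dgn X (c u) = r → m ≤ u)
    (hdeg : ∀ u : Fin (K + 3), IsDegen X (c u)) :
    ∃ h : (m : ℕ) < K + 2,
      r + 2 ≤ Set.ncard (setOf fun u : Fin (K + 3) => dgn X (c u) = r ∧
        c u = X.map (SimplexCategory.δ u).op
          (X.map (SimplexCategory.σ ⟨(m : ℕ), h⟩).op (c m))) := by
  set R := {p | Reduces X p (c m)}
  have hR : ∀ p ∈ R, m ≤ p.castSucc := fun p hp => hc.le_castSucc_of_reduces hr hm hmmin hp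
  have hRcard : r + 1 ≤ R.ncard :=
    hm ▸ add_one_le_ncard_reduces (hm ▸ one_le_dgn_of_isDegen (hdeg m))
  obtain ⟨p₀, hp₀⟩ := Set.nonempty_of_ncard_ne_zero (s := R) (by omega)
  obtain ⟨q, hq, -⟩ := hp₀.exists_properlyReduces
  obtain ⟨i, rfl⟩ : ∃ i : Fin (K + 1), i.castSucc.castSucc = m :=
    ⟨⟨m, (Fin.le_def.1 (hR _ hq.reduces_castSucc)).trans_lt q.isLt⟩, rfl⟩
  refine ⟨i.castSucc.isLt, ?_⟩
  have hsub : insert i.castSucc.castSucc (Fin.succ '' R) ⊆ {u | dgn X (c u) = r ∧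
      c u = X.map (δ u).op (X.map (σ i.castSucc).op (c i.castSucc.castSucc))} := by
    rintro u (rfl | ⟨p, hp, rfl⟩)
    · exact ⟨hm, (SSet.δ_comp_σ_self_apply _ _).symm⟩
    · exact hc.eq_map_δ_map_σ_of_reduces hr hm hmmin hp
  calc r + 2 ≤ (insert i.castSucc.castSucc (Fin.succ '' R)).ncard := by
        rw [ncard_insert_image_succ hR]; omega
    _ ≤ _ := Set.ncard_le_ncard hsub

end AufhebungSSet
end

section
/- Let X be a simplicial set and let x and y be degenerate n-simplices of X (n ≥ 1). If x and y have the same faces, i.e., xδ_i = yδ_i for all 0 ≤ i ≤ n, then x = y. -/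
open CategoryTheory Simplicial

namespace AufhebungSSet

/-! A degenerate simplex `x` satisfies `x = sᵢ dᵢ x` for some `i`. Given `x = sᵢ dᵢ x` and
`y = sⱼ dⱼ y` with `i < j`, the identities `dᵢ sⱼ = sⱼ₋₁ dᵢ` and `sᵢ sⱼ₋₁ = sⱼ sᵢ` put
`x = sᵢ dᵢ y` in the image of `sⱼ`, whence `x = sⱼ dⱼ x = sⱼ dⱼ y = y`. -/

open SimplexCategory

variable {X : SSet} {n : ℕ}

lemma map_δ_map_σ_self (i : Fin (n + 1)) (w : X _⦋n⦌) :
    X.map (δ i.castSucc).op (X.map (σ i).op w) = w := by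
  simp only [← Functor.map_comp_apply, ← op_comp, δ_comp_σ_self, op_id, Functor.map_id_apply]

lemma properlyReduces_map_σ (i : Fin (n + 1)) (w : X _⦋n⦌) :
    ProperlyReduces X i (X.map (σ i).op w) := by
  rw [ProperlyReduces, map_δ_map_σ_self]

lemma IsDegen.exists_properlyReduces {x : X _⦋n + 1⦌} (hx : IsDegen X x) :
    ∃ i, ProperlyReduces X i x := by
  obtain ⟨m, hm, ε, -, y, rfl⟩ := hx
  have hε : ¬ Function.Injective ε.toOrderHom := fun hinj => by
    have := Fintype.card_le_of_injective _ hinj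
    simp only [Fintype.card_fin] at this
    omega
  obtain ⟨i, θ, rfl⟩ := eq_σ_comp_of_not_injective ε hε
  exact ⟨i, by simpa using properlyReduces_map_σ i (X.map θ.op y)⟩

lemma ProperlyReduces.eq_of_map_δ_eq {i : Fin (n + 1)} {x y : X _⦋n + 1⦌}
    (hx : ProperlyReduces X i x) (hy : ProperlyReduces X i y)
    (h : X.map (δ i.castSucc).op x = X.map (δ i.castSucc).op y) : x = y := by
  rw [hx, hy, h]

lemma map_σ_map_δ_map_σ_mem_range_of_lt {i j : Fin (n + 1)} (hij : i < j) (v : X _⦋n⦌) :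
    X.map (σ i).op (X.map (δ i.castSucc).op (X.map (σ j).op v)) ∈ Set.range (X.map (σ j).op) := by
  cases n with
  | zero => omega
  | succ m =>
    obtain ⟨i, rfl⟩ := Fin.exists_castSucc_eq.mpr (Fin.ne_last_of_lt hij)
    obtain ⟨j, rfl⟩ := Fin.exists_succ_eq.mpr (Fin.ne_zero_of_lt hij)
    have hij : i ≤ j := Fin.castSucc_lt_succ_iff.mp hij
    refine ⟨X.map (σ i).op (X.map (δ i.castSucc).op v), ?_⟩
    simp only [← Functor.map_comp_apply, ← op_comp,
      δ_comp_σ_of_le (Fin.castSucc_le_castSucc_iff.mpr hij), σ_comp_σ_assoc hij]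

lemma ProperlyReduces.map_σ_map_δ_of_lt {i j : Fin (n + 1)} {y : X _⦋n + 1⦌}
    (hy : ProperlyReduces X j y) (hij : i < j) :
    ProperlyReduces X j (X.map (σ i).op (X.map (δ i.castSucc).op y)) := by
  obtain ⟨u, hu⟩ := map_σ_map_δ_map_σ_mem_range_of_lt hij (X.map (δ j.castSucc).op y)
  rw [hy, ← hu]
  exact properlyReduces_map_σ j u

/-- Two degenerate `n`-simplices (`n ≥ 1`) with the same faces are equal. -/
theorem degen_eq_of_faces_eq (X : SSet) (n : ℕ) (x y : X _⦋n + 1⦌)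
    (hx : IsDegen X x) (hy : IsDegen X y)
    (h : ∀ i : Fin (n + 2),
      X.map (SimplexCategory.δ i).op x = X.map (SimplexCategory.δ i).op y) :
    x = y := by
  obtain ⟨i, hxi⟩ := hx.exists_properlyReduces
  obtain ⟨j, hyj⟩ := hy.exists_properlyReduces
  wlog hij : i ≤ j generalizing x y i j
  · exact (this y x hy hx (fun k => (h k).symm) j hyj i hxi (le_of_not_ge hij)).symm
  have hxj : ProperlyReduces X j x := by
    rcases hij.lt_or_eq with hlt | rfl
    · rw [hxi, h i.castSucc]
      exact hyj.map_σ_map_δ_of_lt hlt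
    · exact hxi
  exact hxj.eq_of_map_δ_eq hyj (h j.castSucc)

end AufhebungSSet
end

section
/- Every 0-skeletal simplicial set is 1-coskeletal, and every 1-skeletal simplicial set is 2-coskeletal. That is, if every k-simplex of X with k > 0 (respectively k > 1) is degenerate, then every k-sphere in X with k > 1 (respectively k > 2) has a unique filler. -/
open CategoryTheory Simplicial

namespace AufhebungSSet

/-!
A `k`-skeletal simplicial set has every simplex a degeneracy of one of dimension `≤ k`.

For `k = 0` every simplex is constant, and the vertices of a sphere all agree (every edge of the
sphere is constant), so the constant simplex at that vertex is the one and only filler.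

For `k = 1` every simplex is `w g` with `w` an edge and `g : [n] ⟶ [1]`; taking `w` to be the
diagonal `0 → n` and letting `g b = 0` exactly when the edge `0 → b` is constant gives a normal
form, so a simplex is determined by its edges. In a triangle one short edge is constant and the
long edge equals the other one. A sphere of dimension `≥ 3` contains every edge and triangle of a
would-be filler; the triangle rule shows that these edges are those of `w g` for `w` the sphere's
diagonal and `g` as above, and both existence and uniqueness of the filler follow by comparing
edges.
-/

open SimplexCategory

variable {X : SSet}

def IsSkeletal (X : SSet) (k : ℕ) : Prop :=
  ∀ n : ℕ, k < n → ∀ x : X _⦋n⦌, IsDegen X x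

def IsConst {n : ℕ} (x : X _⦋n⦌) : Prop :=
  ∃ v : X _⦋0⦌, x = X.map (const ⦋n⦌ ⦋0⦌ 0).op v

lemma map_map {m n p : ℕ} (x : X _⦋n⦌) (f : ⦋m⦌ ⟶ ⦋n⦌) (g : ⦋p⦌ ⟶ ⦋m⦌) :
    X.map g.op (X.map f.op x) = X.map (g ≫ f).op x := by
  rw [op_comp, Functor.map_comp_apply]

lemma IsSkeletal.exists_eq_map {k : ℕ} (hX : IsSkeletal X k) {n : ℕ} (x : X _⦋n⦌) :
    ∃ m ≤ k, ∃ (z : X _⦋m⦌) (g : ⦋n⦌ ⟶ ⦋m⦌), x = X.map g.op z := by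
  induction n using Nat.strong_induction_on with
  | _ n ih =>
    by_cases hn : n ≤ k
    · exact ⟨n, hn, x, 𝟙 _, by simp⟩
    · obtain ⟨m, hm, ε, -, y, rfl⟩ := hX n (by omega) x
      obtain ⟨p, hp, z, g, rfl⟩ := ih m hm y
      exact ⟨p, hp, z, ε ≫ g, map_map z g ε⟩

lemma isConst_map_const {m : ℕ} (x : X _⦋m⦌) (n : ℕ) (i : Fin (m + 1)) :
    IsConst (X.map (const ⦋n⦌ ⦋m⦌ i).op x) :=
  ⟨X.map (const ⦋0⦌ ⦋m⦌ i).op x, by rw [map_map, ← const_fac_thru_zero]⟩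

lemma IsConst.map {m n : ℕ} {x : X _⦋n⦌} (hx : IsConst x) (f : ⦋m⦌ ⟶ ⦋n⦌) :
    IsConst (X.map f.op x) := by
  obtain ⟨v, rfl⟩ := hx
  rw [map_map, eq_const_to_zero (f ≫ _)]
  exact isConst_map_const v m 0

lemma IsConst.eq_map_vertex {n : ℕ} {x : X _⦋n⦌} (hx : IsConst x) (i : Fin (n + 1)) :
    x = X.map (const ⦋n⦌ ⦋0⦌ 0).op (X.map (const ⦋0⦌ ⦋n⦌ i).op x) := by
  obtain ⟨v, rfl⟩ := hx
  rw [map_map, map_map, eq_const_to_zero ((_ ≫ _) ≫ _)]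

lemma IsConst.map_const_eq {n : ℕ} {x : X _⦋n⦌} (hx : IsConst x) (i : Fin (n + 1)) :
    X.map (const ⦋n⦌ ⦋n⦌ i).op x = x := by
  rw [const_fac_thru_zero, ← map_map, ← hx.eq_map_vertex]

lemma isConst_of_isSkeletal_zero (hX : IsSkeletal X 0) {n : ℕ} (x : X _⦋n⦌) : IsConst x := by
  obtain ⟨m, hm, z, g, rfl⟩ := hX.exists_eq_map x
  obtain rfl : m = 0 := by omega
  rw [eq_const_to_zero g]
  exact isConst_map_const z n 0

lemma exists_eq_map_diag_of_isSkeletal_one (hX : IsSkeletal X 1) {n : ℕ} (x : X _⦋n⦌) :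
    ∃ g : ⦋n⦌ ⟶ ⦋1⦌, x = X.map g.op (X.map (diag n).op x) ∧
      ∀ b, g.toOrderHom b = 0 ↔ IsConst (X.map (mkOfLe 0 b (Fin.zero_le b)).op x) := by
  by_cases hx : IsConst x
  · refine ⟨const _ _ 0, ?_, fun b => iff_of_true rfl (hx.map _)⟩
    obtain ⟨v, rfl⟩ := hx
    rw [map_map, map_map, eq_const_to_zero ((_ ≫ _) ≫ _)]
  obtain ⟨m, hm, z, g, rfl⟩ := hX.exists_eq_map x
  obtain rfl : m = 1 := by
    by_contra hm1
    obtain rfl : m = 0 := by omega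
    exact hx (by rw [eq_const_to_zero g]; exact isConst_map_const z n 0)
  have hz : ¬ IsConst z := fun h => hx (h.map g)
  have hg : ∀ v : Fin 2, ¬ ∀ t, g.toOrderHom t = v := fun v h =>
    hx (by rw [show g = const _ _ v by ext t : 3; exact h t]; exact isConst_map_const z n v)
  have h0 : g.toOrderHom 0 = 0 := by
    by_contra h
    exact hg 1 fun t => by have := g.toOrderHom.monotone (Fin.zero_le t); grind
  have hlast : g.toOrderHom (Fin.last n) = 1 := by
    by_contra h
    exact hg 0 fun t => by have := g.toOrderHom.monotone (Fin.le_last t); grind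
  refine ⟨g, ?_, fun b => ?_⟩
  · rw [map_map z g, map_map, show diag n ≫ g = 𝟙 _ from Hom.ext_one_left _ _ h0 hlast]
    simp
  · rw [map_map]
    rcases (show g.toOrderHom b = 0 ∨ g.toOrderHom b = 1 by grind) with hb | hb
    · rw [show mkOfLe 0 b _ ≫ g = const _ _ 0 from Hom.ext_one_left _ _ h0 hb]
      simp [hb, isConst_map_const]
    · rw [show mkOfLe 0 b _ ≫ g = 𝟙 _ from Hom.ext_one_left _ _ h0 hb]
      simp [hb, hz]

lemma ext_of_isSkeletal_one (hX : IsSkeletal X 1) {n : ℕ} {x x' : X _⦋n⦌}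
    (h : ∀ f : ⦋1⦌ ⟶ ⦋n⦌, X.map f.op x = X.map f.op x') : x = x' := by
  obtain ⟨g, hx, hg⟩ := exists_eq_map_diag_of_isSkeletal_one hX x
  obtain ⟨g', hx', hg'⟩ := exists_eq_map_diag_of_isSkeletal_one hX x'
  have hgg' : g = g' := by
    ext b : 3
    have hb := (hg b).trans ((h _).symm ▸ (hg' b)).symm
    exact Fin.fin_two_eq_of_eq_zero_iff hb
  calc x = X.map g.op (X.map (diag n).op x) := hx
    _ = X.map g'.op (X.map (diag n).op x') := by rw [hgg', h]
    _ = x' := hx'.symm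

lemma triangle_of_isSkeletal_one (hX : IsSkeletal X 1) (t : X _⦋2⦌) :
    (IsConst (X.map (mkOfLe 0 1 (by decide)).op t) ∧
        X.map (mkOfLe 0 2 (by decide)).op t = X.map (mkOfLe 1 2 (by decide)).op t) ∨
      (IsConst (X.map (mkOfLe 1 2 (by decide)).op t) ∧
        X.map (mkOfLe 0 2 (by decide)).op t = X.map (mkOfLe 0 1 (by decide)).op t) := by
  obtain ⟨m, hm, z, g, rfl⟩ := hX.exists_eq_map t
  simp only [map_map]
  have h01 := g.toOrderHom.monotone (show (0 : Fin 3) ≤ 1 by decide)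
  have h12 := g.toOrderHom.monotone (show (1 : Fin 3) ≤ 2 by decide)
  rcases (show g.toOrderHom 0 = g.toOrderHom 1 ∨ g.toOrderHom 1 = g.toOrderHom 2 by grind)
    with h | h
  · left
    rw [show mkOfLe 0 1 _ ≫ g = const _ _ (g.toOrderHom 0) from Hom.ext_one_left _ _ rfl h.symm]
    exact ⟨isConst_map_const z 1 _, congrArg (fun f => X.map f.op z) (Hom.ext_one_left _ _ h)⟩
  · right
    rw [show mkOfLe 1 2 _ ≫ g = const _ _ (g.toOrderHom 1) from Hom.ext_one_left _ _ rfl h.symm]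
    exact ⟨isConst_map_const z 1 _,
      congrArg (fun f => X.map f.op z) (Hom.ext_one_left _ _ (h1 := h.symm))⟩

lemma exists_eq_comp_δ {m n : ℕ} (f : ⦋m⦌ ⟶ ⦋n + 1⦌) (hm : m ≤ n) :
    ∃ (i : Fin (n + 2)) (e : ⦋m⦌ ⟶ ⦋n⦌), f = e ≫ δ i :=
  eq_comp_δ_of_not_surjective f fun hf => by
    have : Epi f := epi_iff_surjective.mpr hf
    have : n + 1 ≤ m := len_le_of_epi f
    omega

section Sphere

variable {K : ℕ} {c : Fin (K + 3) → X _⦋K + 1⦌}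

/-- A sphere is a map `∂Δ[K + 2] ⟶ X`; `sphereAt c f` is its value on a simplex `f` of the
boundary, i.e. on a map `f` missing some vertex (for surjective `f` the value is meaningless). -/
noncomputable def sphereAt (c : Fin (K + 3) → X _⦋K + 1⦌) {m : ℕ} (f : ⦋m⦌ ⟶ ⦋K + 2⦌) :
    X _⦋m⦌ :=
  open Classical in
  if h : ∃ p : Fin (K + 3) × (⦋m⦌ ⟶ ⦋K + 1⦌), p.2 ≫ δ p.1 = f then
    X.map h.choose.2.op (c h.choose.1)
  else X.map (const ⦋m⦌ ⦋K + 1⦌ 0).op (c 0)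

lemma IsSphere.map_eq_map_of_lt (hc : IsSphere X c) {m : ℕ} {i i' : Fin (K + 3)} (hii' : i < i')
    {e e' : ⦋m⦌ ⟶ ⦋K + 1⦌} (h : e ≫ δ i = e' ≫ δ i') : X.map e.op (c i) = X.map e'.op (c i') := by
  obtain ⟨i, rfl⟩ := Fin.exists_castSucc_eq.mpr (Fin.ne_last_of_lt hii')
  obtain ⟨j, rfl⟩ := Fin.exists_succ_eq.mpr (Fin.ne_zero_of_lt hii')
  have hij : i ≤ j := Fin.castSucc_lt_succ_iff.mp hii'
  obtain ⟨g, rfl⟩ := eq_comp_δ_of_not_surjective' e' i fun t ht => by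
    have hv : i.castSucc.succAbove (e.toOrderHom t) = j.succ.succAbove (e'.toOrderHom t) :=
      congrArg (fun f => f.toOrderHom t) h
    rw [ht, Fin.succAbove_of_castSucc_lt _ _ hii'] at hv
    exact Fin.succAbove_ne _ _ hv
  have he : e = g ≫ δ j := by
    rw [← cancel_mono (δ i.castSucc), h, Category.assoc, Category.assoc, δ_comp_δ hij]
  rw [he, ← map_map, ← map_map, hc i j hij]

lemma IsSphere.sphereAt_comp_δ (hc : IsSphere X c) {m : ℕ} (e : ⦋m⦌ ⟶ ⦋K + 1⦌) (i : Fin (K + 3)) :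
    sphereAt c (e ≫ δ i) = X.map e.op (c i) := by
  have h : ∃ p : Fin (K + 3) × (⦋m⦌ ⟶ ⦋K + 1⦌), p.2 ≫ δ p.1 = e ≫ δ i := ⟨(i, e), rfl⟩
  rw [sphereAt, dif_pos h]
  have hp := h.choose_spec
  rcases lt_trichotomy h.choose.1 i with hlt | heq | hgt
  · exact hc.map_eq_map_of_lt hlt hp
  · rw [heq] at hp ⊢
    rw [(cancel_mono (δ i)).mp hp]
  · exact (hc.map_eq_map_of_lt hgt hp.symm).symm

lemma IsSphere.sphereAt_comp (hc : IsSphere X c) {m p : ℕ} (g : ⦋p⦌ ⟶ ⦋m⦌) (f : ⦋m⦌ ⟶ ⦋K + 2⦌)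
    (hm : m ≤ K + 1) : sphereAt c (g ≫ f) = X.map g.op (sphereAt c f) := by
  obtain ⟨i, e, rfl⟩ := exists_eq_comp_δ f hm
  rw [← Category.assoc, hc.sphereAt_comp_δ, hc.sphereAt_comp_δ, map_map]

lemma IsFiller.map_eq_sphereAt {y : X _⦋K + 2⦌} (hy : IsFiller X y c) (hc : IsSphere X c) {m : ℕ}
    (f : ⦋m⦌ ⟶ ⦋K + 2⦌) (hm : m ≤ K + 1) : X.map f.op y = sphereAt c f := by
  obtain ⟨i, e, rfl⟩ := exists_eq_comp_δ f hm
  rw [← map_map, hy i, hc.sphereAt_comp_δ]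

lemma IsSphere.sphereAt_mkOfLe_of_isConst (hc : IsSphere X c) {a b : Fin (K + 3)} (hab : a ≤ b)
    (h : IsConst (sphereAt c (mkOfLe a b hab))) :
    sphereAt c (mkOfLe a b hab) = sphereAt c (const ⦋1⦌ _ a) ∧
      sphereAt c (mkOfLe a b hab) = sphereAt c (const ⦋1⦌ _ b) := by
  have hv : ∀ i : Fin 2, sphereAt c (mkOfLe a b hab) =
      sphereAt c (const ⦋1⦌ _ ((mkOfLe a b hab).toOrderHom i)) := fun i => by
    rw [← const_comp, hc.sphereAt_comp _ _ (by omega), h.map_const_eq]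
  exact ⟨hv 0, hv 1⟩

theorem IsSphere.existsUnique_isFiller_of_isSkeletal_zero (hX : IsSkeletal X 0)
    (hc : IsSphere X c) : ∃! y : X _⦋K + 2⦌, IsFiller X y c := by
  set v := sphereAt c (const ⦋0⦌ ⦋K + 2⦌ 0)
  have hv : ∀ a, sphereAt c (const ⦋0⦌ _ a) = v := fun a => by
    obtain ⟨h0, ha⟩ :=
      hc.sphereAt_mkOfLe_of_isConst (Fin.zero_le a) (isConst_of_isSkeletal_zero hX _)
    have := congrArg (fun x => X.map (const ⦋0⦌ ⦋1⦌ 0).op x) (ha.symm.trans h0)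
    rwa [← hc.sphereAt_comp _ _ (by omega), ← hc.sphereAt_comp _ _ (by omega), const_comp,
      const_comp] at this
  refine ⟨X.map (const ⦋K + 2⦌ ⦋0⦌ 0).op v, fun i => ?_, fun y hy => ?_⟩
  · rw [map_map, eq_const_to_zero (δ i ≫ _), (isConst_of_isSkeletal_zero hX (c i)).eq_map_vertex 0,
      ← hc.sphereAt_comp_δ, const_comp, hv]
  · rw [(isConst_of_isSkeletal_zero hX y).eq_map_vertex 0, hy.map_eq_sphereAt hc _ (by omega)]

lemma IsSphere.triangle (hX : IsSkeletal X 1) (hc : IsSphere X c) (hK : 1 ≤ K)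
    {a b d : Fin (K + 3)} (hab : a ≤ b) (hbd : b ≤ d) :
    (IsConst (sphereAt c (mkOfLe a b hab)) ∧
        sphereAt c (mkOfLe a d (hab.trans hbd)) = sphereAt c (mkOfLe b d hbd)) ∨
      (IsConst (sphereAt c (mkOfLe b d hbd)) ∧
        sphereAt c (mkOfLe a d (hab.trans hbd)) = sphereAt c (mkOfLe a b hab)) := by
  have key := triangle_of_isSkeletal_one hX (sphereAt c (mkOfLeComp a b d hab hbd))
  simp only [← hc.sphereAt_comp _ _ (by omega : 2 ≤ K + 1)] at key
  rwa [show mkOfLe 0 1 _ ≫ mkOfLeComp a b d hab hbd = mkOfLe a b hab from Hom.ext_one_left _ _,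
    show mkOfLe 0 2 _ ≫ mkOfLeComp a b d hab hbd = mkOfLe a d (hab.trans hbd) from
      Hom.ext_one_left _ _,
    show mkOfLe 1 2 _ ≫ mkOfLeComp a b d hab hbd = mkOfLe b d hbd from Hom.ext_one_left _ _] at key

lemma IsSphere.exists_map_eq_sphereAt (hX : IsSkeletal X 1) (hc : IsSphere X c) (hK : 1 ≤ K) :
    ∃ y : X _⦋K + 2⦌, ∀ f : ⦋1⦌ ⟶ ⦋K + 2⦌, X.map f.op y = sphereAt c f := by
  classical
  have hconst : ∀ {a b : Fin (K + 3)}, a ≤ b → IsConst (sphereAt c (mkOfLe 0 b (Fin.zero_le b))) →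
      IsConst (sphereAt c (mkOfLe 0 a (Fin.zero_le a))) := fun hab hb => by
    rcases hc.triangle hX hK (Fin.zero_le _) hab with ⟨ha, -⟩ | ⟨-, h⟩
    · exact ha
    · rwa [← h]
  let g : ⦋K + 2⦌ ⟶ ⦋1⦌ := mkHom
    ⟨fun b => if IsConst (sphereAt c (mkOfLe 0 b (Fin.zero_le b))) then 0 else 1,
      fun a b hab => by
        by_cases hb : IsConst (sphereAt c (mkOfLe 0 b (Fin.zero_le b)))
        · simp [hb, hconst hab hb]
        · simp only [hb, if_false]
          exact Fin.le_last _⟩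
  refine ⟨X.map g.op (sphereAt c (diag _)), fun f => ?_⟩
  obtain ⟨a, b, hab, rfl⟩ : ∃ a b h, f = mkOfLe a b h :=
    ⟨_, _, f.toOrderHom.monotone (by decide : (0 : Fin 2) ≤ 1), Hom.ext_one_left _ _⟩
  have hw : ∀ i : Fin 2, X.map (const ⦋1⦌ ⦋1⦌ i).op (sphereAt c (diag _)) =
      sphereAt c (const ⦋1⦌ _ ((diag (K + 2)).toOrderHom i)) := fun i => by
    rw [← hc.sphereAt_comp _ _ (by omega), const_comp]
  have hends := fun {p q : Fin (K + 3)} (hpq : p ≤ q) => hc.sphereAt_mkOfLe_of_isConst hpq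
  rw [map_map]
  by_cases hb : IsConst (sphereAt c (mkOfLe 0 b (Fin.zero_le b)))
  · have ha := hconst hab hb
    rw [show mkOfLe a b hab ≫ g = const _ _ 0 from
      Hom.ext_one_left _ _ (if_pos ha) (if_pos hb), hw 0]
    rcases hc.triangle hX hK (Fin.zero_le a) hab with ⟨-, h⟩ | ⟨hab', -⟩
    · exact (hends _ hb).1.symm.trans h
    · exact ((hends _ ha).1.symm.trans (hends _ ha).2).trans (hends _ hab').1.symm
  by_cases ha : IsConst (sphereAt c (mkOfLe 0 a (Fin.zero_le a)))
  · rw [show mkOfLe a b hab ≫ g = 𝟙 _ from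
      Hom.ext_one_left _ _ (if_pos ha) (if_neg hb), op_id, Functor.map_id_apply]
    rcases hc.triangle hX hK (Fin.zero_le a) hab with ⟨-, h⟩ | ⟨-, h⟩
    · rcases hc.triangle hX hK (Fin.zero_le b) (Fin.le_last b) with ⟨hb', -⟩ | ⟨-, h'⟩
      · exact absurd hb' hb
      · exact h'.trans h
    · exact absurd (h ▸ ha) hb
  · rw [show mkOfLe a b hab ≫ g = const _ _ 1 from
      Hom.ext_one_left _ _ (if_neg ha) (if_neg hb), hw 1]
    rcases hc.triangle hX hK (Fin.zero_le a) hab with ⟨ha', -⟩ | ⟨hab', -⟩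
    · exact absurd ha' ha
    rcases hc.triangle hX hK (Fin.zero_le b) (Fin.le_last b) with ⟨hb', -⟩ | ⟨hbl, -⟩
    · exact absurd hb' hb
    · exact ((hends _ hbl).2.symm.trans (hends _ hbl).1).trans (hends _ hab').2.symm

theorem IsSphere.existsUnique_isFiller_of_isSkeletal_one (hX : IsSkeletal X 1)
    (hc : IsSphere X c) (hK : 1 ≤ K) : ∃! y : X _⦋K + 2⦌, IsFiller X y c := by
  obtain ⟨y, hy⟩ := hc.exists_map_eq_sphereAt hX hK
  refine ⟨y, fun i => ext_of_isSkeletal_one hX fun f => ?_, fun y' hy' =>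
    ext_of_isSkeletal_one hX fun f => by rw [hy, hy'.map_eq_sphereAt hc f (by omega)]⟩
  rw [map_map, hy, hc.sphereAt_comp_δ]

end Sphere

/-- Every 0-skeletal simplicial set is 1-coskeletal, and every 1-skeletal simplicial
set is 2-coskeletal. (Spheres of dimension `k = K + 2`; `k > 1` holds for all `K`,
and `k > 2` means `K ≥ 1`.) -/
theorem low_skeletal_coskeletal :
    (∀ X : SSet, (∀ k : ℕ, 0 < k → ∀ x : X _⦋k⦌, IsDegen X x) →
      ∀ (K : ℕ) (c : Fin (K + 3) → X _⦋K + 1⦌), IsSphere X c →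
        ∃! y : X _⦋K + 2⦌, IsFiller X y c) ∧
    (∀ X : SSet, (∀ k : ℕ, 1 < k → ∀ x : X _⦋k⦌, IsDegen X x) →
      ∀ K : ℕ, 1 ≤ K → ∀ c : Fin (K + 3) → X _⦋K + 1⦌, IsSphere X c →
        ∃! y : X _⦋K + 2⦌, IsFiller X y c) :=
  ⟨fun _ hX _ _ hc => hc.existsUnique_isFiller_of_isSkeletal_zero hX,
    fun _ hX _ hK _ hc => hc.existsUnique_isFiller_of_isSkeletal_one hX hK⟩

end AufhebungSSet
end
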